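/- Let H be a Noetherian domain with skew field of fractions K, and let L be a finitely generated left H-module. Then there is an H-module homomorphism i: L → F into a finitely generated free H-module F whose kernel is exactly the torsion submodule of L. -/
import Mathlib

/-!
STATEMENT 5: Let `H` be a (not necessarily commutative) Noetherian domain with skew field of
fractions `K`, and let `L` be a finitely generated left `H`-module.  Then there is an
`H`-module homomorphism `i : L → F` into a finitely generated free `H`-module `F` whose kernel
is exactly the torsion submodule of `L` (the set of elements annihilated by some nonzero
element of `H`).
-/

open Function

set_option linter.unusedSectionVars false
set_option linter.unusedVariables false
set_option maxHeartbeats 1000000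

section Aux
variable {H : Type*} [Ring H] [IsDomain H] [IsNoetherianRing H]
variable {K : Type*} [DivisionRing K] {ι : H →+* K} (hinj : Function.Injective ι)
variable (hfrac : ∀ x : K, ∃ a b : H, b ≠ 0 ∧ x = ι a * (ι b)⁻¹)

/-- The independence lemma behind Goldie's theorem. -/
theorem goldie_indep {a b : H} (ha : a ≠ 0) (hb : b ≠ 0)
    (hno : ∀ s t : H, s ≠ 0 → s * a ≠ t * b) :
    ∀ N (c : ℕ → H), ∑ k ∈ Finset.range N, c k * (a * b ^ k) = 0 → ∀ k < N, c k = 0 := by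
  intro N
  induction N with
  | zero => intro c _ k hk; omega
  | succ n ih =>
    intro c hc k hk
    rw [Finset.sum_range_succ'] at hc
    have hre : ∀ k, c (k+1) * (a * b ^ (k+1)) = (c (k+1) * (a * b ^ k)) * b := by
      intro k; rw [pow_succ, ← mul_assoc, ← mul_assoc, mul_assoc (c (k+1))]
    simp only [hre, pow_zero, mul_one] at hc
    rw [← Finset.sum_mul] at hc
    set T := ∑ x ∈ Finset.range n, c (x + 1) * (a * b ^ x) with hT
    have hc0 : c 0 = 0 := by
      by_contra h
      exact hno (c 0) (-T) h (by rw [neg_mul]; exact eq_neg_of_add_eq_zero_right hc)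
    have hTb : T * b = 0 := by simpa [hc0] using hc
    have hT0 : T = 0 := by
      rcases mul_eq_zero.mp hTb with h | h
      · exact h
      · exact absurd h hb
    have := ih (fun k => c (k+1)) hT0
    match k with
    | 0 => exact hc0
    | (k+1) => exact this k (by omega)

/-- Left Ore condition, from Noetherianity (Goldie). -/
theorem left_ore (a : H) {b : H} (hb : b ≠ 0) :
    ∃ s t : H, s ≠ 0 ∧ s * a = t * b := by
  rcases eq_or_ne a 0 with rfl | ha
  · exact ⟨1, 0, one_ne_zero, by simp⟩
  by_contra hno
  push_neg at hno
  have hno' : ∀ s t : H, s ≠ 0 → s * a ≠ t * b := fun s t hs => hno s t hs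
  have hli : LinearIndependent H (fun k : ℕ => a * b ^ k) := by
    rw [linearIndependent_iff']
    intro s g hg i hi
    classical
    set N := (s.sup id) + 1 with hN
    have hsub : s ⊆ Finset.range N := by
      intro x hx
      simp only [Finset.mem_range, hN]
      exact Nat.lt_succ_of_le (Finset.le_sup (f := id) hx)
    have hsum : ∑ k ∈ Finset.range N, (if k ∈ s then g k else 0) * (a * b ^ k) = 0 := by
      rw [← Finset.sum_subset hsub (fun x _ hxs => by simp [hxs])]
      simpa [smul_eq_mul] using hg
    have := goldie_indep ha hb hno' N _ hsum i (hsub hi |> Finset.mem_range.mp)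
    simpa [hi] using this
  have : Finite ℕ := hli.finite_of_isNoetherian
  exact (instInfiniteNat).not_finite this


include hinj in
theorem iota_ne_zero {b : H} (hb : b ≠ 0) : ι b ≠ 0 := by
  intro h; exact hb (hinj (by simpa using h))

include hinj hfrac in
/-- Right Ore condition, from the fraction hypothesis. -/
theorem right_ore (a : H) {b : H} (hb : b ≠ 0) :
    ∃ a' b' : H, b' ≠ 0 ∧ a * b' = b * a' := by
  obtain ⟨a', b', hb', hx⟩ := hfrac ((ι b)⁻¹ * ι a)
  refine ⟨a', b', hb', hinj ?_⟩
  have h1 : ι a = ι b * ((ι b)⁻¹ * ι a) := by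
    rw [← mul_assoc, mul_inv_cancel₀ (iota_ne_zero hinj hb), one_mul]
  have h2 : ((ι b)⁻¹ * ι a) * ι b' = ι a' := by
    rw [hx, mul_assoc, inv_mul_cancel₀ (iota_ne_zero hinj hb'), mul_one]
  rw [map_mul, map_mul, h1, mul_assoc, h2]


include hinj hfrac in
/-- Common nonzero right multiple of a finite family. -/
theorem common_right_mul {α : Type*} (s : Finset α) (g : α → H) (hg : ∀ a ∈ s, g a ≠ 0) :
    ∃ c : H, c ≠ 0 ∧ ∀ a ∈ s, ∃ u, c = g a * u := by
  classical
  induction s using Finset.induction_on with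
  | empty => exact ⟨1, one_ne_zero, by simp⟩
  | @insert a s ha ih =>
    obtain ⟨c, hc, hcs⟩ := ih (fun x hx => hg x (Finset.mem_insert_of_mem hx))
    obtain ⟨t, st, hst, he⟩ := right_ore hinj hfrac c (hg a (Finset.mem_insert_self a s))
    refine ⟨c * st, mul_ne_zero hc hst, ?_⟩
    intro x hx
    rcases Finset.mem_insert.mp hx with rfl | hx
    · exact ⟨t, he⟩
    · obtain ⟨u, hu⟩ := hcs x hx
      exact ⟨u * st, by rw [hu, mul_assoc]⟩

include hinj in
theorem helperK {s : H} (h d : H) (hs : s ≠ 0) :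
    (ι (s * h))⁻¹ * ι (s * d) = (ι h)⁻¹ * ι d := by
  rw [map_mul, map_mul, mul_inv_rev, mul_assoc, ← mul_assoc (ι s)⁻¹,
    inv_mul_cancel₀ (iota_ne_zero hinj hs), one_mul]

include hinj hfrac in
theorem torsionfree_embeds (M : Type*) [AddCommGroup M] [Module H M] [Module.Finite H M]
    (htf : ∀ (h : H) (m : M), h ≠ 0 → h • m = 0 → m = 0) :
    ∃ (n : ℕ) (F : M →ₗ[H] (Fin n → H)), Function.Injective F := by
  classical
  obtain ⟨n, x, hx⟩ := Module.Finite.exists_fin (R := H) (M := M)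
  -- the independence predicate
  set P : Finset (Fin n) → Prop :=
    fun S => ∀ c : Fin n → H, ∑ i ∈ S, c i • x i = 0 → ∀ i ∈ S, c i = 0 with hP
  -- a maximal independent subset
  obtain ⟨S, hSmem, hSmax⟩ := Finset.exists_max_image
    ((Finset.univ : Finset (Finset (Fin n))).filter P) Finset.card
    ⟨∅, by simp [hP]⟩
  have hPS : P S := (Finset.mem_filter.mp hSmem).2
  -- every generator has a nonzero multiple in the span of S
  have hdep : ∀ j, ∃ (h : H) (d : Fin n → H), h ≠ 0 ∧ h • x j = ∑ i ∈ S, d i • x i := by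
    intro j
    by_cases hj : j ∈ S
    · refine ⟨1, fun i => if i = j then 1 else 0, one_ne_zero, ?_⟩
      simp only [one_smul, ite_smul, zero_smul, Finset.sum_ite_eq' S j x, hj, if_true]
    · have hnP : ¬ P (insert j S) := by
        intro hPins
        have := hSmax (insert j S) (Finset.mem_filter.mpr ⟨Finset.mem_univ _, hPins⟩)
        rw [Finset.card_insert_of_notMem hj] at this
        omega
      simp only [hP] at hnP
      push_neg at hnP
      obtain ⟨c, hcsum, i₀, hi₀, hci₀⟩ := hnP
      rw [Finset.sum_insert hj] at hcsum
      have hcj : c j ≠ 0 := by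
        intro hcj
        rw [hcj, zero_smul, zero_add] at hcsum
        have := hPS c hcsum
        rcases Finset.mem_insert.mp hi₀ with rfl | h
        · exact hci₀ hcj
        · exact hci₀ (this i₀ h)
      refine ⟨c j, fun i => -(c i), hcj, ?_⟩
      have : c j • x j = - ∑ i ∈ S, c i • x i := by
        rw [eq_neg_iff_add_eq_zero]; exact hcsum
      rw [this, ← Finset.sum_neg_distrib]
      simp [neg_smul]
  -- saturation: every element has a nonzero multiple in the span of S
  have hsat : ∀ m : M, ∃ (h : H) (d : Fin n → H), h ≠ 0 ∧ h • m = ∑ i ∈ S, d i • x i := by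
    intro m
    have hm : m ∈ Submodule.span H (Set.range x) := hx ▸ Submodule.mem_top
    refine Submodule.span_induction ?_ ?_ ?_ ?_ hm
    · rintro _ ⟨j, rfl⟩; exact hdep j
    · exact ⟨1, 0, one_ne_zero, by simp⟩
    · rintro m m' _ _ ⟨h, d, hh, hd⟩ ⟨h', d', hh', hd'⟩
      obtain ⟨s, t, hs, hst⟩ := left_ore h hh'
      have hc : s * h ≠ 0 := mul_ne_zero hs hh
      have ht : t ≠ 0 := by
        intro ht; rw [ht, zero_mul] at hst; exact hc hst
      refine ⟨s * h, fun i => s * d i + t * d' i, hc, ?_⟩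
      rw [smul_add]
      have h1 : (s * h) • m = ∑ i ∈ S, (s * d i) • x i := by
        rw [mul_smul, hd, Finset.smul_sum]; simp [smul_smul]
      have h2 : (s * h) • m' = ∑ i ∈ S, (t * d' i) • x i := by
        rw [hst, mul_smul, hd', Finset.smul_sum]; simp [smul_smul]
      rw [h1, h2, ← Finset.sum_add_distrib]
      simp [add_smul]
    · rintro a m _ ⟨h, d, hh, hd⟩
      obtain ⟨s, t, hs, hst⟩ := left_ore a hh
      refine ⟨s, fun i => t * d i, hs, ?_⟩
      rw [smul_smul, hst, mul_smul, hd, Finset.smul_sum]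
      simp [smul_smul]
  choose hh dd hne hspec using hsat
  -- the "coordinates with denominators" map into K
  set ψ : M → Fin n → K := fun m i => (ι (hh m))⁻¹ * ι (dd m i) with hψ
  -- well-definedness
  have W : ∀ (m : M) (h' : H) (d' : Fin n → H), h' ≠ 0 →
      h' • m = ∑ i ∈ S, d' i • x i → ∀ i ∈ S, ψ m i = (ι h')⁻¹ * ι (d' i) := by
    intro m h' d' hh' hd' i hi
    obtain ⟨s, t, hs, hst⟩ := left_ore (hh m) hh'
    have hsh : s * hh m ≠ 0 := mul_ne_zero hs (hne m)
    have ht : t ≠ 0 := by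
      intro ht; rw [ht, zero_mul] at hst; exact hsh hst
    have h1 : (s * hh m) • m = ∑ i ∈ S, (s * dd m i) • x i := by
      rw [mul_smul, hspec m, Finset.smul_sum]; simp [smul_smul]
    have h2 : (s * hh m) • m = ∑ i ∈ S, (t * d' i) • x i := by
      rw [hst, mul_smul, hd', Finset.smul_sum]; simp [smul_smul]
    have h3 : ∑ i ∈ S, (s * dd m i - t * d' i) • x i = 0 := by
      simp only [sub_smul, Finset.sum_sub_distrib, ← h1, ← h2, sub_self]
    have h4 : ∀ i ∈ S, s * dd m i = t * d' i := by
      intro i hi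
      have := hPS _ h3 i hi
      exact sub_eq_zero.mp this
    calc ψ m i = (ι (s * hh m))⁻¹ * ι (s * dd m i) := (helperK hinj _ _ hs).symm
    _ = (ι (t * h'))⁻¹ * ι (t * d' i) := by rw [hst, h4 i hi]
    _ = (ι h')⁻¹ * ι (d' i) := helperK hinj _ _ ht
  have ψzero : ∀ i ∈ S, ψ (0 : M) i = 0 := by
    intro i hi
    have := W 0 1 0 one_ne_zero (by simp) i hi
    simpa using this
  have ψadd : ∀ m m' : M, ∀ i ∈ S, ψ (m + m') i = ψ m i + ψ m' i := by
    intro m m' i hi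
    obtain ⟨s, t, hs, hst⟩ := left_ore (hh m) (hne m')
    have hsh : s * hh m ≠ 0 := mul_ne_zero hs (hne m)
    have ht : t ≠ 0 := by
      intro ht; rw [ht, zero_mul] at hst; exact hsh hst
    have h1 : (s * hh m) • (m + m') = ∑ i ∈ S, (s * dd m i + t * dd m' i) • x i := by
      have e1 : (s * hh m) • m = ∑ i ∈ S, (s * dd m i) • x i := by
        rw [mul_smul, hspec m, Finset.smul_sum]; simp [smul_smul]
      have e2 : (s * hh m) • m' = ∑ i ∈ S, (t * dd m' i) • x i := by
        rw [hst, mul_smul, hspec m', Finset.smul_sum]; simp [smul_smul]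
      rw [smul_add, e1, e2, ← Finset.sum_add_distrib]
      simp [add_smul]
    have hW := W (m + m') (s * hh m) _ hsh h1 i hi
    rw [hW, map_add, mul_add]
    congr 1
    · exact helperK hinj _ _ hs
    · rw [hst]; exact helperK hinj _ _ ht
  have ψsmul : ∀ (a : H) (m : M), ∀ i ∈ S, ψ (a • m) i = ι a * ψ m i := by
    intro a m i hi
    obtain ⟨s, t, hs, hst⟩ := left_ore a (hne m)
    have h1 : s • (a • m) = ∑ i ∈ S, (t * dd m i) • x i := by
      rw [smul_smul, hst, mul_smul, hspec m, Finset.smul_sum]; simp [smul_smul]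
    have hW := W (a • m) s _ hs h1 i hi
    rw [hW]
    have his : ι s ≠ 0 := iota_ne_zero hinj hs
    have hihm : ι (hh m) ≠ 0 := iota_ne_zero hinj (hne m)
    apply mul_left_cancel₀ his
    rw [← mul_assoc, mul_inv_cancel₀ his, one_mul, ← mul_assoc, ← mul_assoc,
      ← map_mul ι s a, hst, map_mul ι t (hh m), mul_assoc (ι t), mul_inv_cancel₀ hihm,
      mul_one, map_mul]
  have ψker : ∀ m : M, (∀ i ∈ S, ψ m i = 0) → m = 0 := by
    intro m hm
    have hdd : ∀ i ∈ S, dd m i = 0 := by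
      intro i hi
      have h0 := hm i hi
      rw [hψ] at h0
      rcases mul_eq_zero.mp h0 with h | h
      · exact absurd h (inv_ne_zero (iota_ne_zero hinj (hne m)))
      · exact hinj (by simpa using h)
    have : hh m • m = 0 := by
      rw [hspec m, Finset.sum_congr rfl (fun i hi => by rw [hdd i hi, zero_smul])]
      simp
    exact htf _ _ (hne m) this
  -- common right denominator for the generators
  obtain ⟨p, q, hq, hpq⟩ :
      ∃ (p q : Fin n × Fin n → H), (∀ ij, q ij ≠ 0) ∧
        ∀ ij, ψ (x ij.2) ij.1 = ι (p ij) * (ι (q ij))⁻¹ := by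
    choose p q hq hpq using fun ij : Fin n × Fin n => hfrac (ψ (x ij.2) ij.1)
    exact ⟨p, q, hq, hpq⟩
  obtain ⟨e, he, heq⟩ := common_right_mul hinj hfrac Finset.univ q (fun ij _ => hq ij)
  have hgen : ∀ j i, ∃ pw : H, ψ (x j) i * ι e = ι pw := by
    intro j i
    obtain ⟨u, hu⟩ := heq (i, j) (Finset.mem_univ _)
    refine ⟨p (i, j) * u, ?_⟩
    rw [hpq (i, j), hu, map_mul, map_mul, mul_assoc, ← mul_assoc (ι (q (i, j)))⁻¹,
      inv_mul_cancel₀ (iota_ne_zero hinj (hq (i, j))), one_mul]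
  -- denominators clear for every element
  have hclear : ∀ m : M, ∀ i ∈ S, ∃ pw : H, ψ m i * ι e = ι pw := by
    intro m
    have hm : m ∈ Submodule.span H (Set.range x) := hx ▸ Submodule.mem_top
    refine Submodule.span_induction ?_ ?_ ?_ ?_ hm
    · rintro _ ⟨j, rfl⟩ i hi; exact hgen j i
    · intro i hi; exact ⟨0, by rw [ψzero i hi, zero_mul, map_zero]⟩
    · rintro m m' _ _ hm hm' i hi
      obtain ⟨pw, hpw⟩ := hm i hi
      obtain ⟨pw', hpw'⟩ := hm' i hi
      exact ⟨pw + pw', by rw [ψadd m m' i hi, add_mul, hpw, hpw', map_add]⟩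
    · rintro a m _ hm i hi
      obtain ⟨pw, hpw⟩ := hm i hi
      exact ⟨a * pw, by rw [ψsmul a m i hi, mul_assoc, hpw, map_mul]⟩
  -- the map into the free module
  set F0 : M → Fin n → H :=
    fun m j => if j ∈ S then Function.invFun ι (ψ m j * ι e) else 0 with hF0
  have hFι : ∀ (m : M) (j : Fin n), j ∈ S → ι (F0 m j) = ψ m j * ι e := by
    intro m j hj
    obtain ⟨pw, hpw⟩ := hclear m j hj
    simp only [hF0, if_pos hj]
    exact Function.invFun_eq ⟨pw, hpw.symm⟩
  refine ⟨n, ⟨⟨F0, ?_⟩, ?_⟩, ?_⟩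
  · intro m m'
    funext j
    by_cases hj : j ∈ S
    · apply hinj
      rw [hFι _ j hj]
      show _ = ι (F0 m j + F0 m' j)
      rw [map_add, hFι _ j hj, hFι _ j hj, ψadd m m' j hj, add_mul]
    · simp [hF0, hj]
  · intro a m
    funext j
    by_cases hj : j ∈ S
    · apply hinj
      rw [hFι _ j hj]
      show _ = ι (a * F0 m j)
      rw [map_mul, hFι _ j hj, ψsmul a m j hj, mul_assoc]
    · simp [hF0, hj]
  · rw [injective_iff_map_eq_zero]
    intro m hm0
    apply ψker
    intro i hi
    have h0 : ι (F0 m i) = 0 := by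
      have : F0 m i = 0 := congrFun hm0 i
      rw [this, map_zero]
    rw [hFι m i hi] at h0
    rcases mul_eq_zero.mp h0 with h | h
    · exact h
    · exact absurd h (iota_ne_zero hinj he)


end Aux

section Aux2
variable {H : Type*} [Ring H] [IsDomain H] [IsNoetherianRing H]

/-- The torsion submodule. -/
def torsionSub (L : Type*) [AddCommGroup L] [Module H L] : Submodule H L where
  carrier := {x | ∃ h : H, h ≠ 0 ∧ h • x = 0}
  zero_mem' := ⟨1, one_ne_zero, by simp⟩
  add_mem' := by
    rintro x y ⟨h, hh, hhx⟩ ⟨g, hg, hgy⟩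
    obtain ⟨s, t, hs, hst⟩ := left_ore h hg
    refine ⟨s * h, mul_ne_zero hs hh, ?_⟩
    rw [smul_add, mul_smul, hhx, smul_zero, hst, mul_smul, hgy, smul_zero, add_zero]
  smul_mem' := by
    rintro a x ⟨h, hh, hhx⟩
    obtain ⟨s, t, hs, hst⟩ := left_ore a hh
    refine ⟨s, hs, ?_⟩
    rw [smul_smul, hst, mul_smul, hhx, smul_zero]


end Aux2

theorem exists_map_to_free_with_torsion_kernel
    (H : Type*) [Ring H] [IsDomain H] [IsNoetherianRing H]
    (K : Type*) [DivisionRing K] (ι : H →+* K) (hinj : Function.Injective ι)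
    (hfrac : ∀ x : K, ∃ a b : H, b ≠ 0 ∧ x = ι a * (ι b)⁻¹)
    (L : Type*) [AddCommGroup L] [Module H L] [Module.Finite H L] :
    ∃ (n : ℕ) (i : L →ₗ[H] (Fin n → H)),
      ∀ x : L, i x = 0 ↔ ∃ h : H, h ≠ 0 ∧ h • x = 0 := by
  set T := torsionSub (H := H) L with hT
  have htf : ∀ (h : H) (m : L ⧸ T), h ≠ 0 → h • m = 0 → m = 0 := by
    intro h m hh hm
    obtain ⟨x, rfl⟩ := Submodule.mkQ_surjective T m
    have : h • x ∈ T := by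
      rw [← Submodule.Quotient.mk_eq_zero (p := T), Submodule.Quotient.mk_smul]
      exact hm
    obtain ⟨g, hg, hgx⟩ := this
    have : x ∈ T := ⟨g * h, mul_ne_zero hg hh, by rw [mul_smul]; exact hgx⟩
    simpa [Submodule.Quotient.mk_eq_zero] using this
  obtain ⟨n, F, hF⟩ := torsionfree_embeds hinj hfrac (L ⧸ T) htf
  refine ⟨n, F.comp T.mkQ, ?_⟩
  intro x
  constructor
  · intro hx
    have : T.mkQ x = 0 := by
      apply hF
      simpa [map_zero] using hx
    rw [Submodule.mkQ_apply, Submodule.Quotient.mk_eq_zero] at this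
    exact this
  · rintro ⟨h, hh, hhx⟩
    have hxT : x ∈ T := ⟨h, hh, hhx⟩
    have : T.mkQ x = 0 := by rwa [Submodule.mkQ_apply, Submodule.Quotient.mk_eq_zero]
    simp [LinearMap.comp_apply, this]
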